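/- arXiv:1008.5104 — 2 statements merged into one kernel-verified Lean document; each statement's English description precedes it below -/
import Mathlib

section
/- For the fold germ f(x,y) = (x,y²), the tangent space Tf equals all of the space E_{2,2} of smooth map germs (ℝ²,0) → ℝ²: every smooth germ k : (ℝ²,0) → ℝ² can be written as k = df·X + Y∘f for some vector field germ X on (ℝ²,0) and some smooth germ Y : (ℝ²,0) → ℝ². -/
open MeasureTheory Metric Filter ContinuousLinearMap

noncomputable section AuxFold3

lemma paramInt_contDiff (n : ℕ) : ∀ {F : Type} [NormedAddCommGroup F] [NormedSpace ℝ F]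
    [CompleteSpace F] (H : (ℝ × ℝ) × ℝ → F), ContDiff ℝ (⊤ : ℕ∞) H →
    ContDiff ℝ n (fun p => ∫ t in (0:ℝ)..1, H (p, t)) := by
  induction n with
  | zero =>
    intro F _ _ _ H hH
    rw [show ((0:ℕ) : WithTop ℕ∞) = 0 from rfl, contDiff_zero]
    exact intervalIntegral.continuous_parametric_intervalIntegral_of_continuous' (f := fun p t => H (p, t))
      (hH.continuous.comp (continuous_fst.prodMk continuous_snd)) 0 1
  | succ n ih =>
    intro F _ _ _ H hH
    have e : ((n + 1 : ℕ) : WithTop ℕ∞) = (n : WithTop ℕ∞) + 1 := by norm_cast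
    rw [e]
    set H' : (ℝ × ℝ) × ℝ → ((ℝ × ℝ) →L[ℝ] F) :=
      fun z => (fderiv ℝ H z).comp (ContinuousLinearMap.inl ℝ (ℝ × ℝ) ℝ) with hH'def
    have hH' : ContDiff ℝ (⊤ : ℕ∞) H' := (hH.fderiv_right (by simp)).clm_comp contDiff_const
    have hdiff : ∀ p t, HasFDerivAt (fun q => H (q, t)) (H' (p, t)) p := fun p t =>
      (hH.differentiable (by simp) (p, t)).hasFDerivAt.comp p (hasFDerivAt_prodMk_left p t)
    rw [contDiff_succ_iff_hasFDerivAt]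
    refine ⟨fun p => ∫ t in (0:ℝ)..1, H' (p, t), ih H' hH', fun p₀ => ?_⟩
    obtain ⟨C, hC⟩ := ((isCompact_closedBall p₀ 1).prod (isCompact_Icc (a := (0:ℝ)) (b := 1))
      ).exists_bound_of_continuousOn hH'.continuous.continuousOn
    refine hasFDerivAt_integral_of_dominated_of_fderiv_le'' (bound := fun _ => C) (μ := MeasureTheory.volume)
      (F := fun x t => H (x, t)) (F' := fun x t => H' (x, t))
      (ball_mem_nhds p₀ one_pos) ?_ ?_ ?_ ?_ ?_ ?_
    · exact Filter.Eventually.of_forall fun x =>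
        (hH.continuous.comp (by fun_prop)).aestronglyMeasurable
    · exact (hH.continuous.comp (by fun_prop)).intervalIntegrable 0 1
    · exact (hH'.continuous.comp (by fun_prop)).aestronglyMeasurable
    · rw [ae_restrict_iff' measurableSet_uIoc]
      refine Filter.Eventually.of_forall fun t ht x hx => hC _ ⟨Metric.ball_subset_closedBall hx, ?_⟩
      have ht' : t ∈ Set.Ioc (0:ℝ) 1 := by rwa [Set.uIoc_of_le zero_le_one] at ht
      exact Set.Ioc_subset_Icc_self ht'
    · exact intervalIntegrable_const
    · exact ae_of_all _ fun t x _ => hdiff x t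

end AuxFold3



/-- The fold normal form. -/
noncomputable def foldMap : ℝ × ℝ → ℝ × ℝ := fun p => (p.1, p.2 ^ 2)

/-- For the fold germ `f(x,y) = (x, y²)`, the tangent space `Tf` is all of the space
`E₂,₂` of smooth map germs `(ℝ²,0) → ℝ²`: every smooth germ `k : (ℝ²,0) → ℝ²` can be
written (as a germ at `0`) as `k = df·X + Y∘f` for some smooth vector field `X` on
`ℝ²` and some smooth map `Y : ℝ² → ℝ²`. -/
theorem fold_tangent_space_full
    (k : ℝ × ℝ → ℝ × ℝ) (hk : ContDiff ℝ (⊤ : ℕ∞) k) :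
    ∃ (X : ℝ × ℝ → ℝ × ℝ) (Y : ℝ × ℝ → ℝ × ℝ),
      ContDiff ℝ (⊤ : ℕ∞) X ∧ ContDiff ℝ (⊤ : ℕ∞) Y ∧
      ∀ᶠ p in nhds ((0 : ℝ × ℝ)), k p = fderiv ℝ foldMap p (X p) + Y (foldMap p) := by
  have hk2 : ContDiff ℝ (⊤ : ℕ∞) (fun p : ℝ × ℝ => (k p).2) := contDiff_snd.comp hk
  set k₂ : ℝ × ℝ → ℝ := fun p => (k p).2 with hk2def
  have hD : ContDiff ℝ (⊤ : ℕ∞) (fun p : ℝ × ℝ => fderiv ℝ k₂ p (0, 1)) :=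
    (hk2.fderiv_right (by simp)).clm_apply contDiff_const
  set D : ℝ × ℝ → ℝ := fun p => fderiv ℝ k₂ p (0, 1) with hDdef
  set G : ℝ × ℝ → ℝ := fun p => ∫ t in Set.Ioc (0:ℝ) 1, D (p.1, t * p.2) with hGdef
  have hder : ∀ (x y t : ℝ), HasDerivAt (fun s => k₂ (x, s * y)) (y * D (x, t * y)) t := by
    intro x y t
    have hm : HasDerivAt (fun s : ℝ => s * y) y t := by
      simpa using (hasDerivAt_id t).mul_const y
    have hγ : HasDerivAt (fun s : ℝ => ((x, s * y) : ℝ × ℝ)) ((0 : ℝ), y) t :=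
      (hasDerivAt_const t x).prodMk hm
    have hf : HasFDerivAt k₂ (fderiv ℝ k₂ (x, t * y)) (x, t * y) :=
      (hk2.differentiable (by simp) (x, t * y)).hasFDerivAt
    have hcomp := hf.comp_hasDerivAt t hγ
    refine hcomp.congr_deriv (Eq.symm ?_)
    have h0 : ((0 : ℝ), y) = y • (((0 : ℝ), (1 : ℝ)) : ℝ × ℝ) := by
      simp [Prod.ext_iff]
    show y * (fderiv ℝ k₂ (x, t * y)) (0, 1) = (fderiv ℝ k₂ (x, t * y)) ((0 : ℝ), y)
    rw [h0, (fderiv ℝ k₂ (x, t * y)).map_smul, smul_eq_mul]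
  have hident : ∀ p : ℝ × ℝ, p.2 * G p = k₂ p - k₂ (p.1, 0) := by
    intro p
    have hcontD : Continuous D := hD.continuous
    have h1 := intervalIntegral.integral_eq_sub_of_hasDerivAt
      (f := fun s => k₂ (p.1, s * p.2)) (f' := fun t => p.2 * D (p.1, t * p.2))
      (a := 0) (b := 1) (fun t _ => hder p.1 p.2 t)
      (Continuous.intervalIntegrable (continuous_const.mul (hcontD.comp (by fun_prop))) 0 1)
    simp only [one_mul, zero_mul] at h1
    rw [intervalIntegral.integral_const_mul] at h1
    rw [intervalIntegral.integral_of_le zero_le_one] at h1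
    simpa [hGdef] using h1
  have hG' : ContDiff ℝ (⊤ : ℕ∞) (fun p : ℝ × ℝ => ∫ t in (0:ℝ)..1, D (p.1, t * p.2)) :=
    contDiff_infty.mpr fun n =>
      paramInt_contDiff n (fun z => D (z.1.1, z.2 * z.1.2)) (hD.comp (by fun_prop))
  have hG : ContDiff ℝ (⊤ : ℕ∞) G := by
    have hGe : G = fun p : ℝ × ℝ => ∫ t in (0:ℝ)..1, D (p.1, t * p.2) :=
      funext fun p => (intervalIntegral.integral_of_le zero_le_one).symm
    rw [hGe]
    exact hG'
  have hfold : ∀ p : ℝ × ℝ, HasFDerivAt foldMap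
      ((ContinuousLinearMap.fst ℝ ℝ ℝ).prod
        ((2 * p.2) • ContinuousLinearMap.snd ℝ ℝ ℝ)) p := by
    intro p
    have h2 : HasFDerivAt (fun q : ℝ × ℝ => q.2 ^ 2)
        ((2 * p.2) • ContinuousLinearMap.snd ℝ ℝ ℝ) p := by
      have h0 : HasDerivAt (fun s : ℝ => s ^ 2) (2 * p.2 ^ 1) p.2 := by
        simpa using hasDerivAt_pow 2 p.2
      have := h0.comp_hasFDerivAt p (hasFDerivAt_snd (𝕜 := ℝ))
      rw [pow_one] at this
      exact this
    exact hasFDerivAt_fst.prodMk h2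
  refine ⟨fun p => ((k p).1, G p / 2), fun q => (0, k₂ (q.1, 0)), ?_, ?_, ?_⟩
  · exact (contDiff_fst.comp hk).prodMk (hG.div_const 2)
  · exact contDiff_const.prodMk (hk2.comp (contDiff_fst.prodMk contDiff_const))
  · apply Filter.Eventually.of_forall
    intro p
    rw [(hfold p).fderiv]
    have hid := hident p
    apply Prod.ext
    · simp [foldMap]
    · simp only [ContinuousLinearMap.prod_apply, Prod.snd_add,
        ContinuousLinearMap.smul_apply, ContinuousLinearMap.coe_snd', foldMap, smul_eq_mul]
      rw [hk2def] at hid ⊢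
      simp only [] at hid ⊢
      nlinarith [hid]
end

section
/- Let f(x,y) = (x, f₂(x,y)) be a smooth germ (ℝ²,0)→(ℝ²,0), let q : ℝⁿ → ℝ be a nondegenerate quadratic form, and define f♯(z,x,y) = (x, f₂(x,y) + q(z)) : (ℝ^{n+2},0) → (ℝ²,0). Then the kernel of the restriction map r : E_{n+2,2} → E_{2,2} (restriction to the xy-plane z=0) is contained in Jf♯, the set of germs of the form df♯·X for vector field germs X on (ℝ^{n+2},0); consequently Tf♯ = r⁻¹(Tf). -/
open scoped Topology NNReal ENNReal
open Filter Set

set_option linter.unusedSectionVars false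
set_option maxHeartbeats 1000000

namespace InflateAux

variable {V : Type*} [NormedAddCommGroup V] [NormedSpace ℝ V]
variable {W : Type*} [NormedAddCommGroup W] [NormedSpace ℝ W] [CompleteSpace W]

theorem param_smooth {E F : Type*} [NormedAddCommGroup E] [NormedSpace ℝ E] [FiniteDimensional ℝ E]
    [NormedAddCommGroup F] [NormedSpace ℝ F] [CompleteSpace F] :
    ∀ (m : ℕ) (φ : ℝ × E → F), ContDiff ℝ (⊤ : ℕ∞) φ →
      ContDiff ℝ m (fun x => ∫ t in (0:ℝ)..1, φ (t, x)) := by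
  intro m
  induction m with
  | zero =>
    intro φ hφ
    rw [Nat.cast_zero, contDiff_zero]
    exact intervalIntegral.continuous_parametric_intervalIntegral_of_continuous'
      (f := fun x t => φ (t, x)) (hφ.continuous.comp continuous_swap) 0 1
  | succ m ih =>
    intro φ hφ
    have hdφ : ContDiff ℝ (⊤ : ℕ∞) (fderiv ℝ φ) := hφ.fderiv_right (by simp)
    set φ' : E → ℝ → E →L[ℝ] F := fun x t =>
      (fderiv ℝ φ (t, x)).comp (ContinuousLinearMap.inr ℝ ℝ E) with hφ'
    have hφ'c : Continuous (fun q : E × ℝ => φ' q.1 q.2) :=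
      (hdφ.continuous.comp continuous_swap).clm_comp continuous_const
    have hd : ∀ x, HasFDerivAt (fun x => ∫ t in (0:ℝ)..1, φ (t, x))
        (∫ t in (0:ℝ)..1, φ' x t) x := by
      intro x
      obtain ⟨C, hC⟩ := (isCompact_Icc.prod (isCompact_closedBall x 1)).exists_bound_of_continuousOn
        (hφ'c.comp continuous_swap).continuousOn
      refine intervalIntegral.hasFDerivAt_integral_of_dominated_of_fderiv_le (bound := fun _ => C)
        (Metric.ball_mem_nhds x one_pos) ?_ ?_ ?_ ?_ ?_ ?_
      · exact Filter.Eventually.of_forall fun y =>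
          (hφ.continuous.comp (by fun_prop)).aestronglyMeasurable
      · exact (hφ.continuous.comp (by fun_prop)).intervalIntegrable _ _
      · exact (hφ'c.comp (continuous_const.prodMk continuous_id :
          Continuous fun t : ℝ => (x, t))).aestronglyMeasurable
      · refine Filter.Eventually.of_forall fun t ht y hy => ?_
        rw [Set.uIoc_of_le zero_le_one] at ht
        exact hC (t, y) ⟨Set.Ioc_subset_Icc_self ht, Metric.ball_subset_closedBall hy⟩
      · exact intervalIntegrable_const
      · refine Filter.Eventually.of_forall fun t _ y _ => ?_
        exact ((hφ.differentiable (by simp) (t, y)).hasFDerivAt).comp y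
          (hasFDerivAt_prodMk_right t y)
    have hcast : ((m + 1 : ℕ) : WithTop ℕ∞) = (m : WithTop ℕ∞) + 1 := by norm_cast
    rw [hcast, contDiff_succ_iff_fderiv_apply]
    refine ⟨fun x => (hd x).differentiableAt, fun h => by simp at h, fun y => ?_⟩
    have hfun : (fun x => fderiv ℝ (fun x => ∫ t in (0:ℝ)..1, φ (t, x)) x y) =
        fun x => ∫ t in (0:ℝ)..1, fderiv ℝ φ (t, x) (0, y) := by
      funext x
      have hI : IntervalIntegrable (φ' x) MeasureTheory.volume 0 1 :=
        (hφ'c.comp (continuous_const.prodMk continuous_id :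
          Continuous fun t : ℝ => (x, t))).intervalIntegrable _ _
      rw [(hd x).fderiv, ContinuousLinearMap.intervalIntegral_apply hI]
      rfl
    rw [hfun]
    exact ih (fun q => fderiv ℝ φ q (0, y)) (hdφ.clm_apply contDiff_const)

theorem hadamard_smooth {U : Type*} [NormedAddCommGroup U] [NormedSpace ℝ U]
    [FiniteDimensional ℝ U]
    (n : ℕ) (G : (Fin n → ℝ) × U → ℝ) (hG : ContDiff ℝ (⊤ : ℕ∞) G) (hG0 : ∀ v, G (0, v) = 0) :
    ∃ H : Fin n → ((Fin n → ℝ) × U → ℝ),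
      (∀ i, ContDiff ℝ (⊤ : ℕ∞) (H i)) ∧ ∀ p : (Fin n → ℝ) × U, G p = ∑ i, p.1 i * H i p := by
  classical
  have hdG : ContDiff ℝ (⊤ : ℕ∞) (fderiv ℝ G) := hG.fderiv_right (by simp)
  have hγ : ContDiff ℝ (⊤ : ℕ∞)
      (fun q : ℝ × ((Fin n → ℝ) × U) => ((q.1 • q.2.1, q.2.2) : (Fin n → ℝ) × U)) := by
    fun_prop
  set φ : Fin n → ℝ × ((Fin n → ℝ) × U) → ℝ := fun i q =>
    fderiv ℝ G (q.1 • q.2.1, q.2.2) ((Pi.single i 1 : Fin n → ℝ), (0 : U)) with hφ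
  have hφC : ∀ i, ContDiff ℝ (⊤ : ℕ∞) (φ i) := fun i =>
    (hdG.comp hγ).clm_apply contDiff_const
  refine ⟨fun i p => ∫ t in (0:ℝ)..1, φ i (t, p),
    fun i => contDiff_infty.2 fun m => param_smooth m (φ i) (hφC i), fun p => ?_⟩
  have hcont : ∀ i, Continuous (fun t : ℝ => φ i (t, p)) := fun i =>
    (hφC i).continuous.comp (by fun_prop)
  have hderiv : ∀ t : ℝ, HasDerivAt (fun t : ℝ => G (t • p.1, p.2))
      (fderiv ℝ G (t • p.1, p.2) (p.1, 0)) t := by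
    intro t
    have h1 : HasDerivAt (fun t : ℝ => ((t • p.1, p.2) : (Fin n → ℝ) × U)) (p.1, 0) t := by
      have := ((hasDerivAt_id t).smul_const p.1).prodMk (hasDerivAt_const t p.2)
      simpa using this
    exact ((hG.differentiable (by simp) _).hasFDerivAt).comp_hasDerivAt t h1
  have hsplit : ∀ x : (Fin n → ℝ) × U, fderiv ℝ G x (p.1, 0) =
      ∑ i, p.1 i * fderiv ℝ G x ((Pi.single i 1 : Fin n → ℝ), (0 : U)) := by
    intro x
    have hv : ((p.1, (0 : U)) : (Fin n → ℝ) × U) =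
        ∑ i, p.1 i • ((Pi.single i 1 : Fin n → ℝ), (0 : U)) := by
      refine Prod.ext ?_ ?_
      · funext j
        simp [Prod.fst_sum, Finset.sum_apply, Pi.single_apply]
      · simp [Prod.snd_sum]
    rw [hv, map_sum]
    simp only [map_smul, smul_eq_mul]
  have hint : IntervalIntegrable (fun t : ℝ => fderiv ℝ G (t • p.1, p.2) (p.1, 0))
      MeasureTheory.volume 0 1 :=
    ((hdG.continuous.comp (by fun_prop)).clm_apply continuous_const).intervalIntegrable _ _
  have hFTC := intervalIntegral.integral_eq_sub_of_hasDerivAt (a := 0) (b := 1)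
    (fun t _ => hderiv t) hint
  simp only [one_smul, zero_smul, hG0, sub_zero] at hFTC
  rw [← hFTC]
  simp only [hsplit]
  have hI : ∀ i ∈ Finset.univ, IntervalIntegrable (fun t : ℝ =>
      p.1 i * fderiv ℝ G (t • p.1, p.2) ((Pi.single i 1 : Fin n → ℝ), (0 : U)))
      MeasureTheory.volume 0 1 := fun i _ =>
    (continuous_const.mul (hcont i)).intervalIntegrable _ _
  rw [intervalIntegral.integral_finsetSum hI]
  refine Finset.sum_congr rfl fun i _ => ?_
  rw [← intervalIntegral.integral_const_mul]

lemma polar_solve (n : ℕ) (Q : QuadraticForm ℝ (Fin n → ℝ))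
    (hQ : ∀ z : Fin n → ℝ, (∀ w : Fin n → ℝ, QuadraticMap.polar (⇑Q) z w = 0) → z = 0) :
    ∃ Wmap : (Fin n → ℝ) →L[ℝ] (Fin n → ℝ),
      ∀ (c z : Fin n → ℝ), QuadraticMap.polar (⇑Q) z (Wmap c) = ∑ i, z i * c i := by
  classical
  set B : LinearMap.BilinForm ℝ (Fin n → ℝ) := QuadraticMap.polarBilin Q with hB
  have hBapp : ∀ z w, B z w = QuadraticMap.polar (⇑Q) z w := fun z w => rfl
  have hnd : B.Nondegenerate := ⟨fun z hz => hQ z fun w => by rw [← hBapp]; exact hz w, fun z hz => hQ z fun w => by rw [QuadraticMap.polar_comm, ← hBapp]; exact hz w⟩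
  set φ : (Fin n → ℝ) →ₗ[ℝ] Module.Dual ℝ (Fin n → ℝ) :=
    { toFun := fun c => ∑ i, c i • LinearMap.proj i
      map_add' := by
        intro a b
        simp only [Pi.add_apply, add_smul]
        rw [Finset.sum_add_distrib]
      map_smul' := by
        intro m a
        simp only [Pi.smul_apply, smul_eq_mul, RingHom.id_apply, Finset.smul_sum, smul_smul] } with hφ
  have hφapp : ∀ c z, φ c z = ∑ i, z i * c i := by
    intro c z
    show (∑ i, c i • LinearMap.proj i) z = ∑ i, z i * c i
    rw [LinearMap.sum_apply]
    exact Finset.sum_congr rfl fun i _ => by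
      simp [LinearMap.proj, mul_comm]
  set Wl : (Fin n → ℝ) →ₗ[ℝ] (Fin n → ℝ) := ((B.toDual hnd).symm.toLinearMap).comp φ with hWl
  refine ⟨LinearMap.toContinuousLinearMap Wl, fun c z => ?_⟩
  have hcoe : (LinearMap.toContinuousLinearMap Wl) c = Wl c := rfl
  rw [hcoe]
  rw [QuadraticMap.polar_comm]
  rw [← hBapp]
  have h1 : B (Wl c) z = φ c z := by
    show B ((B.toDual hnd).symm (φ c)) z = φ c z
    exact LinearMap.BilinForm.apply_toDual_symm_apply (hB := hnd) (φ c) z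
  rw [h1, hφapp]

lemma quadratic_fderiv (n : ℕ) (Q : QuadraticForm ℝ (Fin n → ℝ)) :
    ∃ Mc : (Fin n → ℝ) →L[ℝ] (Fin n → ℝ) →L[ℝ] ℝ,
      (∀ z w, Mc z w = QuadraticMap.polar (⇑Q) z w) ∧
      (∀ z, HasFDerivAt (fun z => Q z) (Mc z) z) ∧
      ContDiff ℝ (⊤ : ℕ∞) (fun z => Q z) := by
  classical
  set step1 : (Fin n → ℝ) →ₗ[ℝ] ((Fin n → ℝ) →L[ℝ] ℝ) :=
    (LinearMap.toContinuousLinearMap :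
        ((Fin n → ℝ) →ₗ[ℝ] ℝ) ≃ₗ[ℝ] ((Fin n → ℝ) →L[ℝ] ℝ)).toLinearMap.comp
      (QuadraticMap.polarBilin Q) with hstep1
  set Mc : (Fin n → ℝ) →L[ℝ] (Fin n → ℝ) →L[ℝ] ℝ :=
    LinearMap.toContinuousLinearMap step1 with hMcdef
  have hMcapp : ∀ z w, Mc z w = QuadraticMap.polar (⇑Q) z w := fun z w => rfl
  have hQrep : ∀ z, Q z = (2⁻¹ : ℝ) • (Mc z z) := by
    intro z
    rw [hMcapp, QuadraticMap.polar_self]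
    simp [two_smul, smul_eq_mul]
    ring
  have hfun : (fun z => Q z) = fun z => (2⁻¹ : ℝ) • (Mc z z) := funext hQrep
  have hbil : IsBoundedBilinearMap ℝ
      (fun w : ((Fin n → ℝ) →L[ℝ] ℝ) × (Fin n → ℝ) => w.1 w.2) := isBoundedBilinearMap_apply
  have hdQ : ∀ z, HasFDerivAt (fun z => Q z) (Mc z) z := by
    intro z
    have hprod : HasFDerivAt (fun z : Fin n → ℝ => (Mc z, z))
        (Mc.prod (ContinuousLinearMap.id ℝ (Fin n → ℝ))) z :=
      (Mc.hasFDerivAt).prodMk (hasFDerivAt_id z)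
    have happ := hbil.hasFDerivAt (Mc z, z)
    have hcomp := HasFDerivAt.comp (f := fun z : Fin n → ℝ => (Mc z, z)) z happ hprod
    have hsm := hcomp.const_smul (2⁻¹ : ℝ)
    rw [hfun]
    convert hsm using 1
    case e'_4 | e'_5 | e'_6 | e'_8 | e'_9 | e'_11 => rfl
    ext w
    simp only [ContinuousLinearMap.smul_apply, ContinuousLinearMap.coe_comp',
      Function.comp_apply, ContinuousLinearMap.prod_apply, ContinuousLinearMap.coe_id',
      id_eq, IsBoundedBilinearMap.deriv_apply]
    have hcomm : Mc w z = Mc z w := by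
      rw [hMcapp, hMcapp, QuadraticMap.polar_comm]
    rw [hcomm]
    simp [smul_eq_mul]
    ring
  have hQC : ContDiff ℝ (⊤ : ℕ∞) (fun z => Q z) := by
    rw [hfun]
    exact ((Mc.contDiff).clm_apply contDiff_id).const_smul _
  exact ⟨Mc, hMcapp, hdQ, hQC⟩

end InflateAux

open InflateAux

/-- **Inflating a germ by a nondegenerate quadratic form.**
Let `f(x,y) = (x, f₂(x,y))` be a smooth germ `(ℝ²,0) → (ℝ²,0)`, let `q : ℝⁿ → ℝ` be a
nondegenerate quadratic form, and set `f♯(z,x,y) = (x, f₂(x,y) + q(z))`, a germ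
`(ℝ^{n+2},0) → (ℝ²,0)`.  Let `r` be the restriction map sending a germ `k` on
`(ℝ^{n+2},0)` to the germ `(x,y) ↦ k(0,x,y)` on `(ℝ²,0)``.  Then:

1. the kernel of `r` is contained in `Jf♯`, i.e. every smooth `k` whose restriction to
   the `xy`-plane vanishes near `0` is, as a germ, of the form `df♯·X` for a smooth
   vector field `X`; and consequently
2. `Tf♯ = r⁻¹(Tf)`: a smooth `k` lies in the tangent space `Tf♯` (i.e. is a germ of the
   form `df♯·X + Y∘f♯`) if and only if its restriction `r k` lies in `Tf` (i.e. is a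
   germ of the form `df·X' + Y'∘f`). -/
theorem inflate_tangent_space
    (n : ℕ) (f₂ : ℝ × ℝ → ℝ) (hf₂ : ContDiff ℝ (⊤ : ℕ∞) f₂) (hf₂0 : f₂ 0 = 0)
    (Q : QuadraticForm ℝ (Fin n → ℝ))
    (hQ : ∀ z : Fin n → ℝ, (∀ w : Fin n → ℝ, QuadraticMap.polar (⇑Q) z w = 0) → z = 0)
    (f : ℝ × ℝ → ℝ × ℝ) (hf : ∀ q : ℝ × ℝ, f q = (q.1, f₂ q))
    (fs : (Fin n → ℝ) × ℝ × ℝ → ℝ × ℝ)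
    (hfs : ∀ p : (Fin n → ℝ) × ℝ × ℝ, fs p = (p.2.1, f₂ (p.2.1, p.2.2) + Q p.1)) :
    -- (1) the kernel of the restriction map is contained in Jf♯
    (∀ k : (Fin n → ℝ) × ℝ × ℝ → ℝ × ℝ, ContDiff ℝ (⊤ : ℕ∞) k →
      (∀ᶠ q in nhds ((0 : ℝ × ℝ)), k (0, q.1, q.2) = 0) →
      ∃ X : (Fin n → ℝ) × ℝ × ℝ → (Fin n → ℝ) × ℝ × ℝ,
        ContDiff ℝ (⊤ : ℕ∞) X ∧
        ∀ᶠ p in nhds ((0 : (Fin n → ℝ) × ℝ × ℝ)), k p = fderiv ℝ fs p (X p)) ∧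
    -- (2) Tf♯ = r⁻¹(Tf)
    (∀ k : (Fin n → ℝ) × ℝ × ℝ → ℝ × ℝ, ContDiff ℝ (⊤ : ℕ∞) k →
      ((∃ (X : (Fin n → ℝ) × ℝ × ℝ → (Fin n → ℝ) × ℝ × ℝ) (Y : ℝ × ℝ → ℝ × ℝ),
          ContDiff ℝ (⊤ : ℕ∞) X ∧ ContDiff ℝ (⊤ : ℕ∞) Y ∧
          ∀ᶠ p in nhds ((0 : (Fin n → ℝ) × ℝ × ℝ)),
            k p = fderiv ℝ fs p (X p) + Y (fs p)) ↔
        (∃ (X' : ℝ × ℝ → ℝ × ℝ) (Y' : ℝ × ℝ → ℝ × ℝ),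
          ContDiff ℝ (⊤ : ℕ∞) X' ∧ ContDiff ℝ (⊤ : ℕ∞) Y' ∧
          ∀ᶠ q in nhds ((0 : ℝ × ℝ)),
            k (0, q.1, q.2) = fderiv ℝ f q (X' q) + Y' (f q)))) := by
  classical
  obtain ⟨Wmap, hWmap⟩ := polar_solve n Q hQ
  obtain ⟨Mc, hMcapp, hdQ, hQC⟩ := quadratic_fderiv n Q
  have hff : f = fun q : ℝ × ℝ => (q.1, f₂ q) := funext hf
  have hfC : ContDiff ℝ (⊤ : ℕ∞) f := by rw [hff]; exact contDiff_fst.prodMk hf₂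
  have hdf : ∀ q : ℝ × ℝ, HasFDerivAt f
      ((ContinuousLinearMap.fst ℝ ℝ ℝ).prod (fderiv ℝ f₂ q)) q := by
    intro q
    rw [hff]
    exact (hasFDerivAt_fst).prodMk (hf₂.differentiable (by simp) q).hasFDerivAt
  have hdfapp : ∀ (q v : ℝ × ℝ), fderiv ℝ f q v = (v.1, fderiv ℝ f₂ q v) := by
    intro q v
    rw [(hdf q).fderiv]
    rfl
  have hfsf : fs = fun p : (Fin n → ℝ) × ℝ × ℝ => (p.2.1, f₂ p.2 + Q p.1) := funext hfs
  have hfsC : ContDiff ℝ (⊤ : ℕ∞) fs := by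
    rw [hfsf]
    exact (contDiff_fst.comp contDiff_snd).prodMk
      ((hf₂.comp contDiff_snd).add (hQC.comp contDiff_fst))
  have hdfs : ∀ p : (Fin n → ℝ) × ℝ × ℝ, HasFDerivAt fs
      (((ContinuousLinearMap.fst ℝ ℝ ℝ).comp
          (ContinuousLinearMap.snd ℝ (Fin n → ℝ) (ℝ × ℝ))).prod
        (((fderiv ℝ f₂ p.2).comp (ContinuousLinearMap.snd ℝ (Fin n → ℝ) (ℝ × ℝ))) +
          ((Mc p.1).comp (ContinuousLinearMap.fst ℝ (Fin n → ℝ) (ℝ × ℝ))))) p := by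
    intro p
    rw [hfsf]
    refine HasFDerivAt.prodMk ?_ (HasFDerivAt.add ?_ ?_)
    · exact hasFDerivAt_fst.comp p hasFDerivAt_snd
    · exact ((hf₂.differentiable (by simp) p.2).hasFDerivAt).comp p hasFDerivAt_snd
    · exact (hdQ p.1).comp p hasFDerivAt_fst
  have hdfsapp : ∀ (p : (Fin n → ℝ) × ℝ × ℝ) (v : (Fin n → ℝ) × ℝ × ℝ),
      fderiv ℝ fs p v =
        (v.2.1, fderiv ℝ f₂ p.2 v.2 + QuadraticMap.polar (⇑Q) p.1 v.1) := by
    intro p v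
    rw [(hdfs p).fderiv]
    simp only [ContinuousLinearMap.prod_apply, ContinuousLinearMap.coe_comp',
      Function.comp_apply, ContinuousLinearMap.coe_snd', ContinuousLinearMap.coe_fst',
      ContinuousLinearMap.add_apply, hMcapp]
  have hdf₂C : ContDiff ℝ (⊤ : ℕ∞) (fderiv ℝ f₂) := hf₂.fderiv_right (by simp)
  have hfderivfsC : ContDiff ℝ (⊤ : ℕ∞) (fderiv ℝ fs) := hfsC.fderiv_right (by simp)
  -- Part (1)
  have key : ∀ k : (Fin n → ℝ) × ℝ × ℝ → ℝ × ℝ, ContDiff ℝ (⊤ : ℕ∞) k →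
      (∀ᶠ q in nhds ((0 : ℝ × ℝ)), k (0, q.1, q.2) = 0) →
      ∃ X : (Fin n → ℝ) × ℝ × ℝ → (Fin n → ℝ) × ℝ × ℝ,
        ContDiff ℝ (⊤ : ℕ∞) X ∧
        ∀ᶠ p in nhds ((0 : (Fin n → ℝ) × ℝ × ℝ)), k p = fderiv ℝ fs p (X p) := by
    intro k hk hk0
    set g : (Fin n → ℝ) × ℝ × ℝ → ℝ :=
      fun p => (k p).2 - fderiv ℝ f₂ p.2 ((k p).1, 0) with hgdef
    have hgC : ContDiff ℝ (⊤ : ℕ∞) g :=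
      (contDiff_snd.comp hk).sub
        ((hdf₂C.comp contDiff_snd).clm_apply ((contDiff_fst.comp hk).prodMk contDiff_const))
    set G : (Fin n → ℝ) × ℝ × ℝ → ℝ := fun p => g p - g (0, p.2) with hGdef
    have hGC : ContDiff ℝ (⊤ : ℕ∞) G := hgC.sub (hgC.comp (contDiff_const.prodMk contDiff_snd))
    have hGvan : ∀ v : ℝ × ℝ, G (0, v) = 0 := fun v => sub_self _
    obtain ⟨H, hHC, hHeq⟩ := hadamard_smooth n G hGC hGvan
    set X : (Fin n → ℝ) × ℝ × ℝ → (Fin n → ℝ) × ℝ × ℝ :=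
      fun p => (Wmap (fun i => H i p), ((k p).1, 0)) with hXdef
    have hXC : ContDiff ℝ (⊤ : ℕ∞) X := by
      refine ContDiff.prodMk ?_ (ContDiff.prodMk (contDiff_fst.comp hk) contDiff_const)
      exact (Wmap.contDiff).comp (contDiff_pi.2 fun i => hHC i)
    refine ⟨X, hXC, ?_⟩
    have hk0' : ∀ᶠ p : (Fin n → ℝ) × ℝ × ℝ in nhds 0, k (0, p.2) = 0 := by
      have ht : Tendsto (fun p : (Fin n → ℝ) × ℝ × ℝ => p.2) (nhds 0) (nhds (0 : ℝ × ℝ)) :=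
        continuous_snd.tendsto' 0 0 rfl
      exact ht.eventually hk0
    filter_upwards [hk0'] with p hp
    rw [hdfsapp]
    have h1 : g (0, p.2) = 0 := by
      rw [hgdef]
      simp only
      rw [hp]
      show (0 : ℝ × ℝ).2 - fderiv ℝ f₂ p.2 (((0 : ℝ × ℝ)).1, 0) = 0
      simp [← Prod.zero_eq_mk]
    have h2 : QuadraticMap.polar (⇑Q) p.1 (X p).1 = G p := by
      show QuadraticMap.polar (⇑Q) p.1 (Wmap (fun i => H i p)) = G p
      rw [hWmap, hHeq p]
    show k p = ((X p).2.1, fderiv ℝ f₂ p.2 (X p).2 + QuadraticMap.polar (⇑Q) p.1 (X p).1)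
    rw [h2, hGdef]
    simp only
    rw [h1, sub_zero]
    show k p = ((k p).1, fderiv ℝ f₂ p.2 ((k p).1, 0) + (g p))
    rw [hgdef]
    simp only
    have h3 : fderiv ℝ f₂ p.2 ((k p).1, 0) +
        ((k p).2 - fderiv ℝ f₂ p.2 ((k p).1, 0)) = (k p).2 := by ring
    rw [h3]
  refine ⟨key, ?_⟩
  intro k hk
  constructor
  · rintro ⟨X, Y, hX, hY, heq⟩
    refine ⟨fun q => (X (0, q)).2, Y,
      contDiff_snd.comp (hX.comp (contDiff_const.prodMk contDiff_id)), hY, ?_⟩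
    have hι : Tendsto (fun q : ℝ × ℝ => (((0 : Fin n → ℝ), q) : (Fin n → ℝ) × ℝ × ℝ))
        (nhds 0) (nhds 0) := by
      have hc : Continuous (fun q : ℝ × ℝ => (((0 : Fin n → ℝ), q) : (Fin n → ℝ) × ℝ × ℝ)) := by
        fun_prop
      exact hc.tendsto' 0 0 rfl
    filter_upwards [hι.eventually heq] with q hq
    rw [hdfsapp] at hq
    have hfs0 : fs ((0 : Fin n → ℝ), q) = f q := by
      rw [hfs, hf]
      show (q.1, f₂ (q.1, q.2) + Q 0) = (q.1, f₂ q)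
      rw [map_zero Q, add_zero]
    rw [hfs0, QuadraticMap.polar_zero_left, add_zero] at hq
    rw [hdfapp]
    exact hq
  · rintro ⟨X', Y', hX', hY', heq'⟩
    set d : (Fin n → ℝ) × ℝ × ℝ → ℝ × ℝ :=
      fun p => k p - (fderiv ℝ fs p ((0 : Fin n → ℝ), X' p.2) + Y' (fs p)) with hddef
    have hdC : ContDiff ℝ (⊤ : ℕ∞) d := by
      refine hk.sub (ContDiff.add ?_ (hY'.comp hfsC))
      exact hfderivfsC.clm_apply (contDiff_const.prodMk (hX'.comp contDiff_snd))
    have hdvan : ∀ᶠ q in nhds ((0 : ℝ × ℝ)), d (0, q.1, q.2) = 0 := by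
      filter_upwards [heq'] with q hq
      rw [hddef]
      simp only
      rw [hdfsapp, QuadraticMap.polar_zero_left, add_zero]
      have hfs0 : fs ((0 : Fin n → ℝ), q.1, q.2) = f q := by
        rw [hfs, hf]
        show (q.1, f₂ (q.1, q.2) + Q 0) = (q.1, f₂ q)
        rw [map_zero Q, add_zero]
      rw [hfs0]
      rw [hdfapp] at hq
      rw [hq]
      exact sub_self _
    obtain ⟨X₀, hX₀C, hX₀⟩ := key d hdC hdvan
    refine ⟨fun p => X₀ p + (((0 : Fin n → ℝ), X' p.2) : (Fin n → ℝ) × ℝ × ℝ), Y',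
      hX₀C.add (contDiff_const.prodMk (hX'.comp contDiff_snd)), hY', ?_⟩
    filter_upwards [hX₀] with p hp
    rw [(fderiv ℝ fs p).map_add]
    have h4 : d p = fderiv ℝ fs p (X₀ p) := hp
    rw [hddef] at h4
    simp only at h4
    have h5 := sub_eq_iff_eq_add.1 h4
    rw [h5]
    abel
end
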